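/- Fix N ≥ 2 and an index i with 0 ≤ i ≤ N−2. Let q₀,…,q_{N−1} and e be elements of a field with e + q_{i+1} ≠ 0. Define ẽ = e·q_i/(e + q_{i+1}), q̃_i = q_{i+1}·q_i/(e + q_{i+1}), q̃_{i+1} = e + q_{i+1}, and q̃_l = q_l for l ≠ i, i+1. Then the matrix identity (I_N + e·E_{i+2,i+1})·R(q) = R(q̃)·(I_N + ẽ·E_{i+2,i+1}) holds, where R(q) is the upper bidiagonal matrix with diagonal entries q₀,…,q_{N−1} and superdiagonal entries 1. -/

import Mathlib

/-!
Write `R(p) = diag(p) + S` with `S` the superdiagonal of ones, and `E = E_{i+2,i+1}`. Multiplying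
by `E` on the left copies row `i+1` into row `i+2`, on the right copies column `i+2` into column
`i+1`; hence both sides equal `diag(·) + S` plus a multiple of `E`. Comparing the two diagonals and
the coefficients of `E` leaves `q̃ + ẽ δ_i = q + e δ_{i+1}` and `e q_i = q̃_{i+1} ẽ` (with `δ_k` the
unit vector at the position of `q_k`), which are the defining formulas of `ẽ` and `q̃`.
-/

namespace Matrix

variable {R : Type*} {N : ℕ}

def superdiagOnes [Zero R] [One R] (N : ℕ) : Matrix (Fin N) (Fin N) R :=
  of fun a b => if (b : ℕ) = a + 1 then 1 else 0

theorem of_ite_eq_diagonal_add_superdiagOnes [AddZeroClass R] [One R] (p : Fin N → R) :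
    of (fun a b => if a = b then p a else if (b : ℕ) = a + 1 then 1 else 0)
      = diagonal p + superdiagOnes N := by
  ext a b
  by_cases hab : a = b
  · subst hab; simp [superdiagOnes]
  · simp [superdiagOnes, hab]

variable [Semiring R]

theorem single_mul_diagonal (i j : Fin N) (c : R) (p : Fin N → R) :
    single i j c * diagonal p = single i j (c * p j) := by
  ext a b
  rw [mul_diagonal, single_apply, single_apply]
  split_ifs with h
  · rw [h.2]
  · exact zero_mul _

theorem diagonal_mul_single (i j : Fin N) (c : R) (p : Fin N → R) :
    diagonal p * single i j c = single i j (p i * c) := by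
  ext a b
  rw [diagonal_mul, single_apply, single_apply]
  split_ifs with h
  · rw [h.1]
  · exact mul_zero _

theorem single_mul_superdiagOnes {i k : Fin N} (hik : (k : ℕ) = i + 1) (j : Fin N) (c : R) :
    single j i c * superdiagOnes N = single j k c := by
  ext a b
  by_cases ha : a = j
  · subst ha
    simp [superdiagOnes, single_apply, Fin.ext_iff, hik, eq_comm]
  · rw [single_mul_apply_of_ne _ _ _ _ _ ha, single_apply, if_neg (fun h => ha h.1.symm)]

theorem superdiagOnes_mul_single {i k : Fin N} (hik : (k : ℕ) = i + 1) (j : Fin N) (c : R) :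
    superdiagOnes N * single k j c = single i j c := by
  ext a b
  by_cases hb : b = j
  · subst hb
    simp [superdiagOnes, single_apply, Fin.ext_iff, hik]
  · rw [mul_single_apply_of_ne _ _ _ _ _ hb, single_apply, if_neg (fun h => hb h.2.symm)]

theorem one_add_single_mul_diagonal_add_superdiagOnes {i j : Fin N} (hij : (j : ℕ) = i + 1)
    {q q' : Fin N → R} {e e' : R} (hq' : q' + Pi.single i e' = q + Pi.single j e)
    (hee' : e * q i = q' j * e') :
    (1 + single j i e) * (diagonal q + superdiagOnes N)
      = (diagonal q' + superdiagOnes N) * (1 + single j i e') := by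
  have hdiag : diagonal q' + single i i e' = diagonal q + single j j e := by
    rw [← diagonal_single, ← diagonal_single, diagonal_add, diagonal_add]
    exact congrArg diagonal hq'
  have hlhs : (1 + single j i e) * (diagonal q + superdiagOnes N)
      = (diagonal q + single j j e) + (single j i (q' j * e') + superdiagOnes N) := by
    simp only [add_mul, mul_add, one_mul, single_mul_diagonal, single_mul_superdiagOnes hij, hee']
    abel
  have hrhs : (diagonal q' + superdiagOnes N) * (1 + single j i e')
      = (diagonal q' + single i i e') + (single j i (q' j * e') + superdiagOnes N) := by
    simp only [add_mul, mul_add, mul_one, diagonal_mul_single, superdiagOnes_mul_single hij]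
    abel
  rw [hlhs, hrhs, hdiag]

end Matrix

open Matrix

theorem stmt_3 {F : Type*} [Field F] (N : ℕ) (hN : 2 ≤ N) (i : ℕ) (hi : i ≤ N - 2)
    (q : Fin N → F) (e : F)
    (he : e + q ⟨i + 1, by omega⟩ ≠ 0) :
    let R : (Fin N → F) → Matrix (Fin N) (Fin N) F := fun p =>
      Matrix.of fun a b => if a = b then p a else if (b : ℕ) = (a : ℕ) + 1 then 1 else 0
    let ii : Fin N := ⟨i, by omega⟩
    let jj : Fin N := ⟨i + 1, by omega⟩
    let etil : F := e * q ii / (e + q jj)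
    let qtil : Fin N → F := fun l =>
      if l = ii then q jj * q ii / (e + q jj)
      else if l = jj then e + q jj
      else q l
    (1 + Matrix.single jj ii e) * R q
      = R qtil * (1 + Matrix.single jj ii etil) := by
  intro R ii jj etil qtil
  have he : e + q jj ≠ 0 := he
  have hij : ii ≠ jj := by simp [ii, jj, Fin.ext_iff]
  have hqtil : qtil + Pi.single ii etil = q + Pi.single jj e := by
    funext l
    by_cases hli : l = ii
    · subst hli
      simp only [qtil, etil, Pi.add_apply, if_pos, Pi.single_eq_same, Pi.single_eq_of_ne hij]
      field_simp
      ring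
    by_cases hlj : l = jj
    · subst hlj
      simp only [qtil, Pi.add_apply, if_neg hij.symm, if_pos, Pi.single_eq_of_ne hij.symm,
        Pi.single_eq_same, add_zero]
      exact add_comm e (q jj)
    · simp [qtil, hli, hlj]
  have hetil : e * q ii = qtil jj * etil := by
    simp only [qtil, etil, if_neg hij.symm, if_pos]
    field_simp
  simp only [R, of_ite_eq_diagonal_add_superdiagOnes]
  exact one_add_single_mul_diagonal_add_superdiagOnes rfl hqtil hetil
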